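/- Let A_1, ..., A_z be square tropical matrices over ℝ (all entries finite), each of size at least 2×2, with 0 on all diagonals and whose off-diagonal entries, taken all together, form a basis of a free abelian subgroup of (ℝ, +) and are all nonzero. Then for α ≠ β, the column spaces C(A_α) and C(A_β) are not isomorphic as T-semimodules. -/

import Mathlib

open scoped Classical

/-- The tropical (max-plus) semiring carrier: `ℝ ∪ {-∞}`, where `⊔` is tropical
addition (max) and `+` is tropical multiplication (with `⊥ = -∞` absorbing). -/
abbrev Trop : Type := WithBot ℝ

/-- Tropical matrix multiplication: `(A ⊗ B) i j = max_k (A i k + B k j)`. -/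
def tmul {n m p : ℕ} (A : Fin n → Fin m → Trop) (B : Fin m → Fin p → Trop) :
    Fin n → Fin p → Trop :=
  fun i j => Finset.univ.sup fun k => A i k + B k j

/-- Tropical matrix-vector multiplication (column vector on the right). -/
def tvmul {n m : ℕ} (A : Fin n → Fin m → Trop) (v : Fin m → Trop) : Fin n → Trop :=
  fun i => Finset.univ.sup fun k => A i k + v k

/-- Tropical vector-matrix multiplication (row vector on the left). -/
def vtmul {n m : ℕ} (v : Fin n → Trop) (A : Fin n → Fin m → Trop) : Fin m → Trop :=
  fun j => Finset.univ.sup fun k => v k + A k j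

/-- The tropical identity matrix: `0` on the diagonal, `-∞` elsewhere. -/
def tId (n : ℕ) : Fin n → Fin n → Trop :=
  fun i j => if i = j then ((0 : ℝ) : Trop) else ⊥

/-- A monomial matrix: exactly one entry different from `-∞` in each row and each column. -/
def IsMonomial {n : ℕ} (P : Fin n → Fin n → Trop) : Prop :=
  (∀ i, ∃! j, P i j ≠ ⊥) ∧ (∀ j, ∃! i, P i j ≠ ⊥)

/-- A `T`-subsemimodule of `T^n`: closed under tropical addition (max) and scaling. -/
def IsTropSubmodule {n : ℕ} (S : Set (Fin n → Trop)) : Prop :=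
  (∀ x ∈ S, ∀ y ∈ S, x ⊔ y ∈ S) ∧
  (∀ c : Trop, ∀ x ∈ S, (fun i => c + x i) ∈ S)

/-- The `T`-subsemimodule generated by a set of vectors. -/
def genBy {n : ℕ} (G : Set (Fin n → Trop)) : Set (Fin n → Trop) :=
  ⋂₀ {S | IsTropSubmodule S ∧ G ⊆ S}

/-- The column space of a tropical matrix. -/
def colSpace {n m : ℕ} (A : Fin n → Fin m → Trop) : Set (Fin n → Trop) :=
  genBy {v | ∃ j, v = fun i => A i j}

/-- The row space of a tropical matrix. -/
def rowSpace {n m : ℕ} (A : Fin n → Fin m → Trop) : Set (Fin m → Trop) :=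
  genBy {v | ∃ i, v = fun j => A i j}

/-- The column rank: minimum cardinality of a generating set of the column space. -/
noncomputable def colRank {n m : ℕ} (A : Fin n → Fin m → Trop) : ℕ :=
  sInf {k | ∃ G : Finset (Fin n → Trop), G.card = k ∧ genBy (↑G) = colSpace A}

/-- The row rank: minimum cardinality of a generating set of the row space. -/
noncomputable def rowRank {n m : ℕ} (A : Fin n → Fin m → Trop) : ℕ :=
  sInf {k | ∃ G : Finset (Fin m → Trop), G.card = k ∧ genBy (↑G) = rowSpace A}

/-- Isomorphism of tropical subsemimodules (given by a bijection preserving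
tropical addition and scaling). -/
def TropIso {n m : ℕ} (S : Set (Fin n → Trop)) (S' : Set (Fin m → Trop)) : Prop :=
  ∃ f : (Fin n → Trop) → (Fin m → Trop),
    Set.BijOn f S S' ∧
    (∀ x ∈ S, ∀ y ∈ S, f (x ⊔ y) = f x ⊔ f y) ∧
    (∀ c : Trop, ∀ x ∈ S, f (fun i => c + x i) = fun i => c + f x i)

/-- The `H`-class of a matrix `A` in `M(T)` (among matrices of the same shape),
characterised by equality of column and row spaces. -/
def HSet {n m : ℕ} (A : Fin n → Fin m → Trop) : Set (Fin n → Fin m → Trop) :=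
  {B | colSpace B = colSpace A ∧ rowSpace B = rowSpace A}

/-- Adjacency of the coloured bipartite graph `B_A` of a tropical matrix. -/
def BAdj {r c : ℕ} (A : Fin r → Fin c → Trop) :
    (Fin r ⊕ Fin c) → (Fin r ⊕ Fin c) → Prop
  | Sum.inl i, Sum.inr j => A i j ≠ ⊥
  | Sum.inr j, Sum.inl i => A i j ≠ ⊥
  | _, _ => False

/-- Connectedness of the bipartite graph `B_A`. -/
def BConnected {r c : ℕ} (A : Fin r → Fin c → Trop) : Prop :=
  ∀ x y : Fin r ⊕ Fin c, Relation.ReflTransGen (BAdj A) x y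

/-- `lam` is a tropical eigenvalue of `P`. -/
def IsEig {n : ℕ} (P : Fin n → Fin n → Trop) (lam : Trop) : Prop :=
  ∃ v : Fin n → Trop, v ≠ (fun _ => ⊥) ∧ tvmul P v = fun i => lam + v i

/-- The group `G_A` of monomial matrices `P` with `C(PA) = C(A)`. -/
def GA {r c : ℕ} (A : Fin r → Fin c → Trop) : Set (Fin r → Fin r → Trop) :=
  {P | IsMonomial P ∧ colSpace (tmul P A) = colSpace A}

/-- The dual group `{}_AG` of monomial matrices `Q` with `R(AQ) = R(A)`. -/
def AGr {r c : ℕ} (A : Fin r → Fin c → Trop) : Set (Fin c → Fin c → Trop) :=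
  {Q | IsMonomial Q ∧ rowSpace (tmul A Q) = rowSpace A}

/-!
Independence of the off-diagonal entries makes every 2×2 tropical minor of `A_α` nonsingular, and
then each column of `A_α` is an extremal (join-irreducible) element of `C(A_α)`. An isomorphism
`f : C(A_α) → C(A_β)` preserves extremals and the order, so it maps column `j` of `A_α` to
`λ_j + (column π j of A_β)`, and the largest `t` with `t + col_k ≤ col_j` to the corresponding
quantity for the columns `π j, π k` of `A_β`, shifted by `λ_j - λ_k`. Summing over `(j, k)` and
`(k, j)` cancels the `λ`'s and equates an integer combination of entries of `A_α` having a nonzero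
off-diagonal coefficient with one of entries of `A_β`, against independence.
-/

open Finset

section ColumnSpace

variable {n m : ℕ}

lemma isTropSubmodule_genBy (G : Set (Fin n → Trop)) : IsTropSubmodule (genBy G) :=
  ⟨fun x hx y hy S hS => hS.1.1 x (hx S hS) y (hy S hS),
    fun c x hx S hS => hS.1.2 c x (hx S hS)⟩

lemma genBy_subset {G S : Set (Fin n → Trop)} (hS : IsTropSubmodule S) (h : G ⊆ S) :
    genBy G ⊆ S :=
  Set.sInter_subset_of_mem ⟨hS, h⟩

lemma IsTropSubmodule.bot_mem {S : Set (Fin n → Trop)} (hS : IsTropSubmodule S)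
    {v : Fin n → Trop} (hv : v ∈ S) : ⊥ ∈ S := by
  have h := hS.2 ⊥ v hv
  simp only [WithBot.bot_add] at h
  exact h

lemma col_mem_colSpace (M : Fin n → Fin m → Trop) (j : Fin m) :
    (fun i => M i j) ∈ colSpace M :=
  fun _ hS => hS.2 ⟨j, rfl⟩

lemma tvmul_eq_sup (M : Fin n → Fin m → Trop) (x : Fin m → Trop) :
    tvmul M x = univ.sup fun k i => x k + M i k := by
  ext i
  simp only [tvmul, Finset.sup_apply, add_comm]

lemma tvmul_sup (M : Fin n → Fin m → Trop) (x y : Fin m → Trop) :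
    tvmul M (x ⊔ y) = tvmul M x ⊔ tvmul M y := by
  ext i
  simp only [tvmul, Pi.sup_apply, ← Finset.sup_sup]
  exact Finset.sup_congr rfl fun k _ => (max_add_add_left _ _ _).symm

lemma add_tvmul (M : Fin n → Fin m → Trop) (c : Trop) (x : Fin m → Trop) (i : Fin n) :
    c + tvmul M x i = tvmul M (fun k => c + x k) i := by
  unfold tvmul
  rw [Finset.apply_sup_eq_sup_comp_of_linearOrder (c + ·)
    (fun _ _ h => add_le_add le_rfl h) (WithBot.add_bot c)]
  exact Finset.sup_congr rfl fun k _ => add_left_comm c _ _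

lemma tvmul_single (M : Fin n → Fin m → Trop) (j : Fin m) :
    tvmul M (fun k => if k = j then 0 else ⊥) = fun i => M i j := by
  ext i
  simp [tvmul, apply_ite, Finset.sup_ite, Finset.filter_eq']

lemma colSpace_subset_range_tvmul (M : Fin n → Fin m → Trop) :
    colSpace M ⊆ Set.range (tvmul M) := by
  refine genBy_subset ⟨?_, ?_⟩ ?_
  · rintro _ ⟨x, rfl⟩ _ ⟨y, rfl⟩
    exact ⟨x ⊔ y, tvmul_sup M x y⟩
  · rintro c _ ⟨x, rfl⟩
    exact ⟨_, funext fun i => (add_tvmul M c x i).symm⟩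
  · rintro _ ⟨j, rfl⟩
    exact ⟨_, tvmul_single M j⟩

end ColumnSpace

section Extremal

variable {n m n' : ℕ} {S : Set (Fin n → Trop)} {S' : Set (Fin n' → Trop)}
  {f : (Fin n → Trop) → Fin n' → Trop}

def IsExtremal (S : Set (Fin n → Trop)) (v : Fin n → Trop) : Prop :=
  v ∈ S ∧ v ≠ ⊥ ∧ ∀ x ∈ S, ∀ y ∈ S, x ⊔ y = v → x = v ∨ y = v

lemma IsExtremal.exists_eq_of_finset_sup_eq {ι : Type*} (hS : IsTropSubmodule S)
    {v : Fin n → Trop} (hv : IsExtremal S v) (s : Finset ι)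
    {g : ι → Fin n → Trop} (hg : ∀ k ∈ s, g k ∈ S) (hsup : s.sup g = v) :
    ∃ k ∈ s, g k = v := by
  induction s using Finset.cons_induction with
  | empty => exact absurd hsup.symm hv.2.1
  | cons a s ha ih =>
    rw [Finset.sup_cons] at hsup
    have hs : s.sup g ∈ S :=
      Finset.sup_induction (hS.bot_mem hv.1) hS.1 fun k hk => hg k (mem_cons_of_mem hk)
    rcases hv.2.2 _ (hg a (mem_cons_self a s)) _ hs hsup with h | h
    · exact ⟨a, mem_cons_self a s, h⟩
    · obtain ⟨k, hk, hgk⟩ := ih (fun k hk => hg k (mem_cons_of_mem hk)) h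
      exact ⟨k, mem_cons_of_mem hk, hgk⟩

lemma IsExtremal.exists_eq_scaled_col {M : Fin n → Fin m → Trop} {v : Fin n → Trop}
    (hv : IsExtremal (colSpace M) v) : ∃ j, ∃ t : ℝ, v = fun i => (t : Trop) + M i j := by
  obtain ⟨x, rfl⟩ := colSpace_subset_range_tvmul M hv.1
  obtain ⟨j, -, hj⟩ := hv.exists_eq_of_finset_sup_eq (isTropSubmodule_genBy _) univ
    (g := fun k i => x k + M i k)
    (fun k _ => (isTropSubmodule_genBy _).2 (x k) _ (col_mem_colSpace M k))
    (tvmul_eq_sup M x).symm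
  cases hxj : x j using WithBot.recBotCoe with
  | bot => exact absurd (by rw [← hj, hxj]; ext; simp) hv.2.1
  | coe t => exact ⟨j, t, by rw [← hj, hxj]⟩

-- `TropIso S S'` unfolds to `∃ f, IsTropIsoOn f S S'`.
def IsTropIsoOn (f : (Fin n → Trop) → Fin n' → Trop) (S : Set (Fin n → Trop))
    (S' : Set (Fin n' → Trop)) : Prop :=
  Set.BijOn f S S' ∧
    (∀ x ∈ S, ∀ y ∈ S, f (x ⊔ y) = f x ⊔ f y) ∧
    (∀ c : Trop, ∀ x ∈ S, f (fun i => c + x i) = fun i => c + f x i)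

lemma IsTropIsoOn.le_iff_map_le (hf : IsTropIsoOn f S S') (hS : IsTropSubmodule S)
    {u v : Fin n → Trop} (hu : u ∈ S) (hv : v ∈ S) : v ≤ u ↔ f v ≤ f u := by
  rw [← sup_eq_left, ← sup_eq_left, ← hf.2.1 u hu v hv]
  exact (hf.1.injOn.eq_iff (hS.1 u hu v hv) hu).symm

lemma IsExtremal.map {v : Fin n → Trop} (hv : IsExtremal S v) (hf : IsTropIsoOn f S S')
    (hS : IsTropSubmodule S) : IsExtremal S' (f v) := by
  obtain ⟨hbij, hsup, hscale⟩ := hf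
  refine ⟨hbij.mapsTo hv.1, fun hfv => hv.2.1 ?_, ?_⟩
  · have hbot := hscale ⊥ v hv.1
    simp only [WithBot.bot_add] at hbot
    exact hbij.injOn hv.1 (hS.bot_mem hv.1) (hfv.trans hbot.symm)
  · intro x' hx' y' hy' hxy
    obtain ⟨x, hx, rfl⟩ := hbij.surjOn hx'
    obtain ⟨y, hy, rfl⟩ := hbij.surjOn hy'
    have h := hbij.injOn (hS.1 x hx y hy) hv.1 ((hsup x hx y hy).trans hxy)
    rcases hv.2.2 x hx y hy h with rfl | rfl
    · exact Or.inl rfl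
    · exact Or.inr rfl

end Extremal

section Generic

variable {n m : ℕ}

def HasNonsingularTwoMinors {ι κ : Type*} (M : ι → κ → ℝ) : Prop :=
  ∀ a b j k, a ≠ b → j ≠ k → M a j + M b k ≠ M b j + M a k

lemma coe_add_eq_coe_iff {a b : ℝ} {x : Trop} :
    (a : Trop) + x = b ↔ x = ((b - a : ℝ) : Trop) := by
  cases x using WithBot.recBotCoe with
  | bot => simp
  | coe t =>
    norm_cast
    exact eq_sub_iff_add_eq'.symm

lemma le_tvmul (M : Fin n → Fin m → Trop) (x : Fin m → Trop) (j : Fin m) :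
    (fun i => x j + M i j) ≤ tvmul M x := by
  rw [tvmul_eq_sup]
  exact Finset.le_sup (f := fun k i => x k + M i k) (mem_univ j)

lemma eq_zero_of_tvmul_eq_col {M : Fin n → Fin m → ℝ} (hM : HasNonsingularTwoMinors M)
    (hmn : m ≤ n) {w : Fin m → Trop} {j : Fin m}
    (hw : tvmul (fun i k => (M i k : Trop)) w = fun i => (M i j : Trop)) : w j = 0 := by
  by_contra hwj
  have hattained : ∀ i, ∃ k ∈ univ.erase j, w k = ((M i j - M i k : ℝ) : Trop) := by
    intro i
    obtain ⟨k, -, hk⟩ :=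
      univ.exists_mem_eq_sup ⟨j, mem_univ j⟩ fun k => (M i k : Trop) + w k
    have hk' : w k = ((M i j - M i k : ℝ) : Trop) :=
      coe_add_eq_coe_iff.1 (hk.symm.trans (congrFun hw i))
    refine ⟨k, mem_erase.2 ⟨?_, mem_univ k⟩, hk'⟩
    rintro rfl
    exact hwj (by simpa using hk')
  -- Two rows attain the supremum at the same column `κ a ≠ j`: a singular minor.
  choose κ hκ hwκ using hattained
  obtain ⟨a, -, b, -, hab, hκab⟩ := exists_ne_map_eq_of_card_lt_of_maps_to (s := univ)
    (by
      simp only [card_univ, Fintype.card_fin, mem_univ, card_erase_of_mem]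
      have := j.pos
      omega)
    fun i _ => hκ i
  have hk : κ a ≠ j := (mem_erase.1 (hκ a)).1
  have hgap : M a j - M a (κ a) = M b j - M b (κ a) := by
    have h := (hwκ a).symm.trans (hκab ▸ hwκ b)
    exact_mod_cast h
  exact hM a b j (κ a) hab hk.symm (by linarith)

lemma isExtremal_col {M : Fin n → Fin m → ℝ} (hM : HasNonsingularTwoMinors M) (hmn : m ≤ n)
    (j : Fin m) : IsExtremal (colSpace fun i k => (M i k : Trop)) fun i => (M i j : Trop) := by
  refine ⟨col_mem_colSpace _ j, fun h => WithBot.coe_ne_bot (congrFun h (Fin.castLE hmn j)), ?_⟩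
  intro x hx y hy hxy
  obtain ⟨c, rfl⟩ := colSpace_subset_range_tvmul _ hx
  obtain ⟨c', rfl⟩ := colSpace_subset_range_tvmul _ hy
  have h0 : c j ⊔ c' j = 0 := eq_zero_of_tvmul_eq_col hM hmn (by rw [tvmul_sup, hxy])
  have hcol (d : Fin m → Trop) (hd : d j = 0) :
      (fun i => (M i j : Trop)) ≤ tvmul (fun i k => (M i k : Trop)) d := by
    simpa [hd] using le_tvmul (fun i k => (M i k : Trop)) d j
  rcases max_choice (c j) (c' j) with h | h
  · exact Or.inl (le_antisymm (hxy ▸ le_sup_left) (hcol c (h ▸ h0)))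
  · exact Or.inr (le_antisymm (hxy ▸ le_sup_right) (hcol c' (h ▸ h0)))

end Generic

section ColGap

variable {ι κ : Type*} [Fintype ι] [Nonempty ι]

def colGap (M : ι → κ → ℝ) (j k : κ) : ℝ :=
  univ.inf' univ_nonempty fun i => M i j - M i k

lemma le_colGap_iff {M : ι → κ → ℝ} {j k : κ} {t : ℝ} :
    t ≤ colGap M j k ↔ ∀ i, t + M i k ≤ M i j := by
  simp [colGap, le_sub_iff_add_le]

lemma colGap_le (M : ι → κ → ℝ) (j k : κ) (i : ι) : colGap M j k ≤ M i j - M i k :=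
  inf'_le _ (mem_univ i)

lemma exists_colGap_eq (M : ι → κ → ℝ) (j k : κ) : ∃ i, colGap M j k = M i j - M i k :=
  let ⟨i, _, h⟩ := univ.exists_mem_eq_inf' univ_nonempty fun i => M i j - M i k
  ⟨i, h⟩

lemma exists_colGap_add_colGap_eq (M : ι → κ → ℝ) (j k : κ) :
    ∃ a b, colGap M j k + colGap M k j = M a j - M a k - M b j + M b k := by
  obtain ⟨a, ha⟩ := exists_colGap_eq M j k
  obtain ⟨b, hb⟩ := exists_colGap_eq M k j
  exact ⟨a, b, by rw [ha, hb]; ring⟩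

lemma exists_ne_colGap_add_colGap_eq [Nontrivial ι] (M : ι → κ → ℝ) (j k : κ) :
    ∃ a b, a ≠ b ∧ colGap M j k + colGap M k j = M a j - M a k - M b j + M b k := by
  obtain ⟨a, ha⟩ := exists_colGap_eq M j k
  obtain ⟨b, hb⟩ := exists_colGap_eq M k j
  by_cases h : a = b
  · -- then `M i j - M i k` does not depend on `i`, and any other row will do
    subst h
    obtain ⟨b, hb'⟩ := exists_ne a
    have := colGap_le M j k b
    have := colGap_le M k j b
    exact ⟨a, b, hb'.symm, by linarith⟩
  · exact ⟨a, b, h, by rw [ha, hb]; ring⟩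

end ColGap

lemma colGap_eq_of_isTropIsoOn {n m n' m' : ℕ} [Nonempty (Fin n)] [Nonempty (Fin n')]
    {M : Fin n → Fin m → ℝ} {N : Fin n' → Fin m' → ℝ}
    {f : (Fin n → Trop) → Fin n' → Trop}
    (hf : IsTropIsoOn f (colSpace fun i k => (M i k : Trop))
      (colSpace fun i k => (N i k : Trop)))
    {j k : Fin m} {p q : Fin m'} {s t : ℝ}
    (hj : f (fun i => (M i j : Trop)) = fun i => (s : Trop) + N i p)
    (hk : f (fun i => (M i k : Trop)) = fun i => (t : Trop) + N i q) :
    colGap M j k = colGap N p q + s - t := by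
  have hS : IsTropSubmodule (colSpace fun i k => (M i k : Trop)) := isTropSubmodule_genBy _
  refine eq_of_forall_le_iff fun r => ?_
  calc r ≤ colGap M j k ↔ (fun i => (r : Trop) + M i k) ≤ fun i => (M i j : Trop) := by
        simp [le_colGap_iff, Pi.le_def, ← WithBot.coe_add]
    _ ↔ f (fun i => (r : Trop) + M i k) ≤ f fun i => (M i j : Trop) :=
        hf.le_iff_map_le hS (col_mem_colSpace _ j) (hS.2 _ _ (col_mem_colSpace _ k))
    _ ↔ (fun i => (r : Trop) + ((t : Trop) + N i q)) ≤ fun i => (s : Trop) + N i p := by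
        rw [hf.2.2 _ _ (col_mem_colSpace _ k), hk, hj]
    _ ↔ r ≤ colGap N p q + s - t := by
        rw [show r ≤ colGap N p q + s - t ↔ r + t - s ≤ colGap N p q by
          constructor <;> intro h <;> linarith, le_colGap_iff]
        simp only [Pi.le_def, ← WithBot.coe_add, WithBot.coe_le_coe]
        exact forall_congr' fun i => by constructor <;> intro h <;> linarith

section OffDiagonal

variable {ι : Type*} [DecidableEq ι]

def crossCoeff (a b j k : ι) : ι → ι → ℤ := fun p q =>
  ((if p = a then 1 else 0) - if p = b then 1 else 0) *
    ((if q = j then 1 else 0) - if q = k then 1 else 0)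

lemma crossCoeff_ne_zero {a b j k : ι} (hab : a ≠ b) (hjk : j ≠ k) :
    ∃ p q, p ≠ q ∧ crossCoeff a b j k p q ≠ 0 := by
  by_cases haj : a = j
  · exact ⟨b, j, fun h => hab (haj.trans h.symm), by simp [crossCoeff, hab.symm, hjk]⟩
  · exact ⟨a, j, haj, by simp [crossCoeff, hab, hjk]⟩

variable [Fintype ι]

def offDiagSum (c : ι → ι → ℤ) (M : ι → ι → ℝ) : ℝ :=
  ∑ i, ∑ j, if i = j then 0 else (c i j : ℝ) * M i j

@[simp]
lemma offDiagSum_zero (M : ι → ι → ℝ) : offDiagSum 0 M = 0 := by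
  simp [offDiagSum]

lemma offDiagSum_sub (c c' : ι → ι → ℤ) (M : ι → ι → ℝ) :
    offDiagSum (c - c') M = offDiagSum c M - offDiagSum c' M := by
  simp only [offDiagSum, ← Finset.sum_sub_distrib]
  refine Finset.sum_congr rfl fun i _ => Finset.sum_congr rfl fun j _ => ?_
  split_ifs <;> simp [sub_mul]

lemma offDiagSum_crossCoeff {M : ι → ι → ℝ} (hdiag : ∀ i, M i i = 0) (a b j k : ι) :
    offDiagSum (crossCoeff a b j k) M = M a j - M a k - M b j + M b k := by
  have hsum : offDiagSum (crossCoeff a b j k) M =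
      ∑ p, ∑ q, (crossCoeff a b j k p q : ℝ) * M p q := by
    refine Finset.sum_congr rfl fun p _ => Finset.sum_congr rfl fun q _ => ?_
    split_ifs with h
    · simp [h, hdiag]
    · rfl
  rw [hsum]
  simp [crossCoeff, sub_mul, mul_sub, ite_mul, Finset.sum_sub_distrib]
  ring

end OffDiagonal

section Family

variable {z : ℕ} {nsz : Fin z → ℕ}

def OffDiagIndependent (A : ∀ α : Fin z, Fin (nsz α) → Fin (nsz α) → ℝ) : Prop :=
  ∀ c : ∀ α : Fin z, Fin (nsz α) → Fin (nsz α) → ℤ,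
    ∑ α, offDiagSum (c α) (A α) = 0 → ∀ α i j, i ≠ j → c α i j = 0

variable {A : ∀ α : Fin z, Fin (nsz α) → Fin (nsz α) → ℝ}

lemma OffDiagIndependent.eq_zero_of_offDiagSum_eq_zero (hA : OffDiagIndependent A) {γ : Fin z}
    {c : Fin (nsz γ) → Fin (nsz γ) → ℤ} (h : offDiagSum c (A γ) = 0) {i j : Fin (nsz γ)}
    (hij : i ≠ j) : c i j = 0 := by
  have := hA (Pi.single γ c) ?_ γ i j hij
  · simpa using this
  rw [Fintype.sum_eq_single γ fun δ hδ => by simp [Pi.single_eq_of_ne hδ]]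
  simpa using h

lemma OffDiagIndependent.eq_zero_of_offDiagSum_eq (hA : OffDiagIndependent A) {γ δ : Fin z}
    (hγδ : γ ≠ δ) {c : Fin (nsz γ) → Fin (nsz γ) → ℤ} {d : Fin (nsz δ) → Fin (nsz δ) → ℤ}
    (h : offDiagSum c (A γ) = offDiagSum d (A δ)) {i j : Fin (nsz γ)} (hij : i ≠ j) :
    c i j = 0 := by
  have := hA (Pi.single γ c - Pi.single δ d) ?_ γ i j hij
  · simpa [Pi.single_eq_of_ne hγδ] using this
  rw [Fintype.sum_eq_add γ δ hγδ fun ε hε => by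
    simp [Pi.single_eq_of_ne hε.1, Pi.single_eq_of_ne hε.2]]
  simp only [Pi.sub_apply, Pi.single_eq_same, Pi.single_eq_of_ne hγδ,
    Pi.single_eq_of_ne hγδ.symm, offDiagSum_sub, offDiagSum_zero, h]
  ring

lemma OffDiagIndependent.hasNonsingularTwoMinors (hA : OffDiagIndependent A)
    (hdiag : ∀ α i, A α i i = 0) (γ : Fin z) : HasNonsingularTwoMinors (A γ) := by
  intro a b j k hab hjk h
  obtain ⟨p, q, hpq, hne⟩ := crossCoeff_ne_zero hab hjk
  refine hne (hA.eq_zero_of_offDiagSum_eq_zero ?_ hpq)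
  rw [offDiagSum_crossCoeff (hdiag γ)]
  linarith

end Family

theorem stmt_19_general (z : ℕ) (nsz : Fin z → ℕ)
    (A : ∀ α : Fin z, Fin (nsz α) → Fin (nsz α) → ℝ)
    (hsize : ∀ α, 2 ≤ nsz α)
    (hdiag : ∀ α i, A α i i = 0)
    (hindep : ∀ c : ∀ α : Fin z, Fin (nsz α) → Fin (nsz α) → ℤ,
      (∑ α, ∑ i, ∑ j, if i = j then (0 : ℝ) else (c α i j : ℝ) * A α i j) = 0 →
      ∀ α i j, i ≠ j → c α i j = 0)
    (α β : Fin z) (hne : α ≠ β) :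
    ¬ TropIso (colSpace (fun i j => ((A α i j : ℝ) : Trop)))
              (colSpace (fun i j => ((A β i j : ℝ) : Trop))) := by
  rintro ⟨f, hf⟩
  have hA : OffDiagIndependent A := hindep
  have : Nontrivial (Fin (nsz α)) := Fin.nontrivial_iff_two_le.2 (hsize α)
  have : Nonempty (Fin (nsz β)) := ⟨⟨0, by have := hsize β; omega⟩⟩
  have hcol (j : Fin (nsz α)) : ∃ p : Fin (nsz β), ∃ s : ℝ,
      f (fun i => (A α i j : Trop)) = fun i => (s : Trop) + A β i p :=
    ((isExtremal_col (hA.hasNonsingularTwoMinors hdiag α) le_rfl j).map hf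
      (isTropSubmodule_genBy _)).exists_eq_scaled_col
  choose π s hπ using hcol
  obtain ⟨j, k, hjk⟩ := exists_pair_ne (Fin (nsz α))
  obtain ⟨a, b, hab, hα⟩ := exists_ne_colGap_add_colGap_eq (A α) j k
  obtain ⟨c, d, hβ⟩ := exists_colGap_add_colGap_eq (A β) (π j) (π k)
  have hgap : colGap (A α) j k + colGap (A α) k j =
      colGap (A β) (π j) (π k) + colGap (A β) (π k) (π j) := by
    rw [colGap_eq_of_isTropIsoOn hf (hπ j) (hπ k), colGap_eq_of_isTropIsoOn hf (hπ k) (hπ j)]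
    ring
  obtain ⟨p, q, hpq, hcoeff⟩ := crossCoeff_ne_zero hab hjk
  refine hcoeff (hA.eq_zero_of_offDiagSum_eq hne (d := crossCoeff c d (π j) (π k)) ?_ hpq)
  rw [offDiagSum_crossCoeff (hdiag α), offDiagSum_crossCoeff (hdiag β)]
  linarith

/-- Square real (all-finite) tropical matrices of size ≥ 2 with zero
diagonals, whose off-diagonal entries are all nonzero and together are ℤ-linearly
independent (i.e. form a basis of a free abelian subgroup of `(ℝ, +)`), have pairwise
non-isomorphic tropical column spaces. -/
theorem stmt_19 (z : ℕ) (nsz : Fin z → ℕ)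
    (A : ∀ α : Fin z, Fin (nsz α) → Fin (nsz α) → ℝ)
    (hsize : ∀ α, 2 ≤ nsz α)
    (hdiag : ∀ α i, A α i i = 0)
    (hnz : ∀ α i j, i ≠ j → A α i j ≠ 0)
    (hindep : ∀ c : ∀ α : Fin z, Fin (nsz α) → Fin (nsz α) → ℤ,
      (∑ α, ∑ i, ∑ j, if i = j then (0 : ℝ) else (c α i j : ℝ) * A α i j) = 0 →
      ∀ α i j, i ≠ j → c α i j = 0)
    (α β : Fin z) (hne : α ≠ β) :
    ¬ TropIso (colSpace (fun i j => ((A α i j : ℝ) : Trop)))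
              (colSpace (fun i j => ((A β i j : ℝ) : Trop))) :=
  stmt_19_general z nsz A hsize hdiag hindep α β hne
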